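/- arXiv:1009.1591 — 4 statements merged into one kernel-verified Lean document; each statement's English description precedes it below -/
import Mathlib

section
/- For a real number ξ and c > 0, the contour integral (1/2πi) ∫_{c-i∞}^{c+i∞} ξ^s ds/s² equals log ξ if ξ ≥ 1, and equals 0 if 0 < ξ ≤ 1. -/
open Complex Real Set MeasureTheory Filter Asymptotics

noncomputable def gInd : ℝ → ℂ := Set.indicator (Set.Ioc 0 1) (fun _ => (1:ℂ))

lemma gInd_integrable : MeasureTheory.Integrable gInd := by
  rw [gInd, integrable_indicator_iff measurableSet_Ioc]
  exact integrableOn_const measure_Ioc_lt_top.ne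

lemma gInd_hasMellin {s : ℂ} (hs : 0 < s.re) : HasMellin gInd s (1 / s) :=
  hasMellin_one_Ioc hs

lemma hasMellin_neg_log {s : ℂ} (hs : 0 < s.re) :
    MellinConvergent (fun t => Real.log t • gInd t) s ∧
      mellin (fun t => Real.log t • gInd t) s = -(1 / s ^ 2) := by
  have hfc : MeasureTheory.LocallyIntegrableOn gInd (Set.Ioi 0) :=
    gInd_integrable.locallyIntegrable.locallyIntegrableOn _
  have hf_top : gInd =O[atTop] (· ^ (-(s.re + 1))) := by
    have h0 : gInd =ᶠ[atTop] 0 := by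
      filter_upwards [eventually_gt_atTop 1] with x hx
      simp [gInd, Set.indicator_apply, not_le.2 hx]
    exact h0.trans_isBigO (isBigO_zero _ _)
  have hf_bot : gInd =O[nhdsWithin 0 (Set.Ioi 0)] (· ^ (-(0:ℝ))) := by
    apply IsBigO.of_bound 1
    filter_upwards [self_mem_nhdsWithin] with x (hx : x ∈ Set.Ioi 0)
    rw [neg_zero, Real.rpow_zero]
    simp only [norm_one, mul_one, gInd]
    by_cases h : x ∈ Set.Ioc 0 1 <;> simp [Set.indicator_apply, h]
  have hd := mellin_hasDerivAt_of_isBigO_rpow hfc hf_top (by linarith) hf_bot hs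
  refine ⟨hd.1, ?_⟩
  have hs0 : s ≠ 0 := fun h => by simp [h] at hs
  have heq : mellin gInd =ᶠ[nhds s] fun z => 1 / z := by
    have hopen : IsOpen {z : ℂ | 0 < z.re} := isOpen_lt continuous_const Complex.continuous_re
    filter_upwards [hopen.mem_nhds hs] with z hz
    exact (gInd_hasMellin hz).2
  have h1 : HasDerivAt (fun z : ℂ => 1 / z) (mellin (fun t => Real.log t • gInd t) s) s :=
    hd.2.congr_of_eventuallyEq heq.symm
  have h2 : HasDerivAt (fun z : ℂ => 1 / z) (-(1 / s ^ 2)) s := by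
    simpa [one_div] using hasDerivAt_inv hs0
  exact h1.unique h2

/-- For `ξ > 0` and `c > 0`, the vertical line integral
`(1/2πi) ∫_{c-i∞}^{c+i∞} ξ^s ds/s²` equals `log ξ` if `ξ ≥ 1` and `0` if `0 < ξ ≤ 1`. -/
theorem contour_integral_xi_s_sq (ξ c : ℝ) (hξ : 0 < ξ) (hc : 0 < c) :
    (1 / (2 * π)) * ∫ t : ℝ, (ξ : ℂ) ^ ((c : ℂ) + I * t) / ((c : ℂ) + I * t) ^ 2 =
      if 1 ≤ ξ then (Real.log ξ : ℂ) else 0 := by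
  set f : ℝ → ℂ := fun t => -(Real.log t • gInd t) with hf_def
  have hx : (0:ℝ) < 1/ξ := by positivity
  have hmc : MellinConvergent f c := by
    have h := (hasMellin_neg_log (s := (c:ℂ)) (by simpa using hc)).1
    have h2 : MeasureTheory.IntegrableOn
        (fun t : ℝ => -((t : ℂ) ^ ((c:ℂ) - 1) • (Real.log t • gInd t))) (Set.Ioi 0) := h.neg
    simpa [MellinConvergent, smul_neg, hf_def] using h2
  have hmel : ∀ t : ℝ, mellin f ((c:ℂ) + t * I) = 1 / ((c:ℂ) + t * I) ^ 2 := by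
    intro t
    have hre : ((c : ℂ) + t * I).re = c := by simp
    have h := (hasMellin_neg_log (s := (c:ℂ) + t * I) (by rw [hre]; exact hc)).2
    have heq : mellin f ((c:ℂ) + t * I)
        = -mellin (fun t => Real.log t • gInd t) ((c:ℂ) + t * I) := by
      simp only [hf_def, mellin, smul_neg, MeasureTheory.integral_neg]
    rw [heq, h, neg_neg]
  have hvi : Complex.VerticalIntegrable (mellin f) c := by
    rw [Complex.VerticalIntegrable]
    have hint : MeasureTheory.Integrable fun t : ℝ => 1 / ((c:ℂ) + t * I) ^ 2 := by
      have hm : Measurable fun t : ℝ => 1 / ((c:ℂ) + t * I) ^ 2 := by fun_prop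
      set m := min (c ^ 2) 1 with hm_def
      have hm0 : 0 < m := lt_min (by positivity) one_pos
      refine MeasureTheory.Integrable.mono' ((integrable_inv_one_add_sq).const_mul (1/m))
        hm.aestronglyMeasurable ?_
      filter_upwards with t
      have habs : ‖((c:ℂ) + t * I)‖ ^ 2 = c ^ 2 + t ^ 2 := by
        rw [← Complex.normSq_eq_norm_sq, Complex.normSq_apply]
        simp
        ring
      have hge : m * (1 + t ^ 2) ≤ c ^ 2 + t ^ 2 := by
        rcases le_total (c ^ 2) 1 with h | h
        · have hme : m = c ^ 2 := min_eq_left h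
          nlinarith [sq_nonneg t]
        · have hme : m = 1 := min_eq_right h
          nlinarith [sq_nonneg t]
      have hpos : (0:ℝ) < m * (1 + t ^ 2) := by positivity
      rw [norm_div, norm_one, norm_pow, habs]
      calc 1 / (c ^ 2 + t ^ 2) ≤ 1 / (m * (1 + t ^ 2)) :=
            one_div_le_one_div_of_le hpos hge
        _ = 1 / m * (1 + t ^ 2)⁻¹ := by rw [one_div, mul_inv, one_div]
    exact hint.congr (by filter_upwards with t; exact (hmel t).symm)
  have hcont : ContinuousAt f (1/ξ) := by
    have hmin : Continuous fun t : ℝ => min t 1 := continuous_id.min continuous_const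
    have hg : ContinuousAt (fun t : ℝ => -((Real.log (min t 1) : ℂ))) (1/ξ) := by
      apply ContinuousAt.neg
      apply Complex.continuous_ofReal.continuousAt.comp
      exact hmin.continuousAt.log (lt_min hx one_pos).ne'
    refine hg.congr ?_
    filter_upwards [isOpen_Ioi.mem_nhds (show (1/ξ : ℝ) ∈ Set.Ioi 0 from hx)] with t ht
    have ht' : (0:ℝ) < t := ht
    rcases le_or_gt t 1 with h1 | h1
    · simp [hf_def, gInd, Set.indicator_apply, Set.mem_Ioc, ht', h1, min_eq_left h1]
    · simp [hf_def, gInd, Set.indicator_apply, Set.mem_Ioc, h1.not_ge, min_eq_right h1.le]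
  have hinv := mellinInv_mellin_eq c f hx hmc hvi hcont
  have hξC : (ξ : ℂ) ≠ 0 := Complex.ofReal_ne_zero.2 hξ.ne'
  have hargs : (ξ : ℂ).arg ≠ π := by
    rw [Complex.arg_ofReal_of_nonneg hξ.le]
    exact Real.pi_ne_zero.symm
  have hpow : ∀ s : ℂ, (1 / (ξ : ℂ)) ^ (-s) = (ξ : ℂ) ^ s := by
    intro s
    rw [one_div, Complex.inv_cpow _ _ hargs, Complex.cpow_neg, inv_inv]
  rw [mellinInv] at hinv
  have hLHS : ((1:ℝ) / (2 * π)) •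
      (∫ y : ℝ, (((1/ξ : ℝ)) : ℂ) ^ (-((c:ℂ) + y * I)) • mellin f ((c:ℂ) + y * I))
      = (1 / (2 * ↑π)) * ∫ t : ℝ, (ξ : ℂ) ^ ((c : ℂ) + I * t) / ((c : ℂ) + I * t) ^ 2 := by
    rw [Complex.real_smul]
    push_cast
    congr 1
    apply MeasureTheory.integral_congr_ae
    filter_upwards with t
    rw [hpow, hmel, smul_eq_mul, mul_comm I (t:ℂ), mul_one_div]
  rw [hLHS] at hinv
  rw [hinv]
  by_cases h1 : 1 ≤ ξ
  · have hmem : (1/ξ : ℝ) ∈ Set.Ioc (0:ℝ) 1 := ⟨hx, by rw [div_le_one hξ]; exact h1⟩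
    rw [if_pos h1]
    show -(Real.log (1/ξ) • gInd (1/ξ)) = (Real.log ξ : ℂ)
    rw [gInd, Set.indicator_of_mem hmem, Complex.real_smul, mul_one, one_div, Real.log_inv]
    push_cast
    ring
  · have hlt : (1:ℝ) < 1/ξ := (lt_div_iff₀ hξ).2 (by linarith [not_le.1 h1])
    have hmem : (1/ξ : ℝ) ∉ Set.Ioc (0:ℝ) 1 := fun h => absurd h.2 hlt.not_ge
    rw [if_neg h1]
    show -(Real.log (1/ξ) • gInd (1/ξ)) = 0
    rw [gInd, Set.indicator_of_notMem hmem, smul_zero, neg_zero]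
end

section
/- For real ξ > 0, δ > 0, and c > 0, the contour integral (1/2πi) ∫_{c-i∞}^{c+i∞} ξ^s (e^{δs}-1)²/s² ds equals min(log(e^{2δ}ξ), log(1/ξ)) if e^{-2δ} ≤ ξ ≤ 1, and equals 0 otherwise. -/
open Complex Real MeasureTheory

/-- Triangle function -/
noncomputable def triFn (δ w : ℝ) : ℝ := max 0 (min w (2 * δ - w))

lemma triFn_eq_zero {δ w : ℝ} (h : w ∉ Set.Ioc 0 (2 * δ)) : triFn δ w = 0 := by
  simp only [Set.mem_Ioc, not_and_or, not_lt, not_le] at h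
  rcases h with h | h
  · exact max_eq_left (le_trans (min_le_left _ _) h)
  · exact max_eq_left (le_trans (min_le_right _ _) (by linarith))

lemma hasDerivAt_expws (s : ℂ) (w : ℝ) :
    HasDerivAt (fun w : ℝ => Complex.exp (w * s)) (Complex.exp (w * s) * s) w := by
  have h : HasDerivAt (fun w : ℝ => (w : ℂ) * s) s w := by
    simpa using (Complex.ofRealCLM.hasDerivAt (x := w)).mul_const s
  exact h.cexp

/-- The key interval-integral computation. -/
lemma tri_exp_integral (δ : ℝ) (hδ : 0 < δ) (s : ℂ) (hs : s ≠ 0) :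
    ∫ w : ℝ, (triFn δ w : ℂ) * Complex.exp (w * s)
      = (Complex.exp (δ * s) - 1) ^ 2 / s ^ 2 := by
  have hs2 : s ^ 2 ≠ 0 := pow_ne_zero _ hs
  rw [← MeasureTheory.setIntegral_eq_integral_of_forall_compl_eq_zero
      (s := Set.Ioc 0 (2 * δ)) (fun w hw => by rw [triFn_eq_zero hw]; simp)]
  rw [← intervalIntegral.integral_of_le (by linarith : (0:ℝ) ≤ 2 * δ)]
  have hsplit : ∫ w in (0:ℝ)..(2*δ), (triFn δ w : ℂ) * Complex.exp (w * s)
      = (∫ w in (0:ℝ)..δ, (triFn δ w : ℂ) * Complex.exp (w * s))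
        + ∫ w in δ..(2*δ), (triFn δ w : ℂ) * Complex.exp (w * s) := by
    rw [intervalIntegral.integral_add_adjacent_intervals] <;>
    · apply Continuous.intervalIntegrable
      exact ((Complex.continuous_ofReal.comp (continuous_const.max (continuous_id.min (continuous_const.sub continuous_id)))).mul
        (Complex.continuous_exp.comp (continuous_ofReal.mul continuous_const)))
  rw [hsplit]
  have h1 : ∫ w in (0:ℝ)..δ, (triFn δ w : ℂ) * Complex.exp (w * s)
      = ∫ w in (0:ℝ)..δ, (w : ℂ) * Complex.exp (w * s) := by
    apply intervalIntegral.integral_congr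
    intro w hw
    rw [Set.uIcc_of_le hδ.le] at hw
    have : triFn δ w = w := by
      unfold triFn
      rw [min_eq_left (by linarith [hw.1, hw.2]), max_eq_right hw.1]
    simp only [this]
  have h2 : ∫ w in δ..(2*δ), (triFn δ w : ℂ) * Complex.exp (w * s)
      = ∫ w in δ..(2*δ), ((2*δ - w : ℝ) : ℂ) * Complex.exp (w * s) := by
    apply intervalIntegral.integral_congr
    intro w hw
    rw [Set.uIcc_of_le (by linarith)] at hw
    have : triFn δ w = 2*δ - w := by
      unfold triFn
      rw [min_eq_right (by linarith [hw.1, hw.2]), max_eq_right (by linarith [hw.2])]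
    simp only [this]
  have d1 : ∀ w : ℝ, HasDerivAt (fun w : ℝ => ((w:ℂ)/s - 1/s^2) * Complex.exp (w * s))
      ((w:ℂ) * Complex.exp (w * s)) w := by
    intro w
    have ha : HasDerivAt (fun w : ℝ => ((w:ℂ)/s - 1/s^2)) (1/s) w := by
      have := ((Complex.ofRealCLM.hasDerivAt (x := w)).div_const s).sub_const ((1:ℂ)/s^2)
      simpa [one_div] using this
    have key := ha.mul (hasDerivAt_expws s w)
    refine HasDerivAt.congr_deriv key ?_
    field_simp
    ring
  have d2 : ∀ w : ℝ, HasDerivAt (fun w : ℝ => (((2*δ:ℝ):ℂ) - w)/s * Complex.exp (w * s)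
        + 1/s^2 * Complex.exp (w * s))
      (((2*δ - w : ℝ):ℂ) * Complex.exp (w * s)) w := by
    intro w
    have ha : HasDerivAt (fun w : ℝ => (((2*δ:ℝ):ℂ) - w)/s) (-1/s) w := by
      simpa using ((hasDerivAt_const w (((2*δ:ℝ):ℂ))).sub (Complex.ofRealCLM.hasDerivAt (x := w))).div_const s
    have key := (ha.mul (hasDerivAt_expws s w)).add
      ((hasDerivAt_const w ((1:ℂ)/s^2)).mul (hasDerivAt_expws s w))
    refine HasDerivAt.congr_deriv key ?_
    push_cast
    field_simp
    ring
  have int1 : IntervalIntegrable (fun w : ℝ => (w:ℂ) * Complex.exp (w * s)) volume 0 δ := by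
    apply Continuous.intervalIntegrable
    exact continuous_ofReal.mul (Complex.continuous_exp.comp (continuous_ofReal.mul continuous_const))
  have int2 : IntervalIntegrable (fun w : ℝ => ((2*δ - w : ℝ):ℂ) * Complex.exp (w * s)) volume δ (2*δ) := by
    apply Continuous.intervalIntegrable
    exact ((Complex.continuous_ofReal.comp (continuous_const.sub continuous_id)).mul
      (Complex.continuous_exp.comp (continuous_ofReal.mul continuous_const)))
  have e1 := intervalIntegral.integral_eq_sub_of_hasDerivAt
    (fun w (_ : w ∈ Set.uIcc (0:ℝ) δ) => d1 w) int1
  have e2 := intervalIntegral.integral_eq_sub_of_hasDerivAt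
    (fun w (_ : w ∈ Set.uIcc δ (2*δ)) => d2 w) int2
  rw [h1, h2, e1, e2]
  have hexp : Complex.exp (((2*δ:ℝ):ℂ) * s) = Complex.exp ((δ:ℂ) * s) ^ 2 := by
    rw [sq, ← Complex.exp_add]
    push_cast
    ring_nf
  rw [hexp]
  push_cast
  simp only [Complex.ofReal_zero, zero_mul, Complex.exp_zero]
  field_simp
  ring

/-- For `ξ > 0`, `δ > 0`, `c > 0`, the vertical line integral
`(1/2πi) ∫_{c-i∞}^{c+i∞} ξ^s (e^{δs}-1)²/s² ds` equals
`min(log(e^{2δ}ξ), log(1/ξ))` if `e^{-2δ} ≤ ξ ≤ 1`, and `0` otherwise. -/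
theorem contour_integral_fejer (ξ δ c : ℝ) (hξ : 0 < ξ) (hδ : 0 < δ) (hc : 0 < c) :
    (1 / (2 * π)) * ∫ t : ℝ,
        (ξ : ℂ) ^ ((c : ℂ) + I * t) *
          (Complex.exp ((δ : ℂ) * ((c : ℂ) + I * t)) - 1) ^ 2 / ((c : ℂ) + I * t) ^ 2 =
      if Real.exp (-2 * δ) ≤ ξ ∧ ξ ≤ 1 then
        ((min (Real.log (Real.exp (2 * δ) * ξ)) (Real.log (1 / ξ)) : ℝ) : ℂ)
      else 0 := by
  set x : ℝ := Real.log ξ with hx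
  set hfun : ℝ → ℂ := fun t => (Complex.exp ((δ:ℂ) * ((c:ℂ) + I * t)) - 1) ^ 2 / ((c:ℂ) + I * t) ^ 2
    with hhfun
  set G : ℝ → ℂ := fun w => (triFn δ w : ℂ) * Complex.exp ((c:ℂ) * w) with hG
  have hπ : (0:ℝ) < π := Real.pi_pos
  have hsne : ∀ t : ℝ, (c:ℂ) + I * t ≠ 0 := by
    intro t h
    have := congrArg Complex.re h
    simp at this
    exact hc.ne' this
  -- continuity of G
  have hG_cont : Continuous G := by
    apply Continuous.mul
    · exact Complex.continuous_ofReal.comp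
        (continuous_const.max (continuous_id.min (continuous_const.sub continuous_id)))
    · exact Complex.continuous_exp.comp (continuous_const.mul continuous_ofReal)
  have hG_supp : HasCompactSupport G := by
    apply HasCompactSupport.intro (isCompact_Icc (a := (0:ℝ)) (b := 2*δ))
    intro w hw
    have : w ∉ Set.Ioc 0 (2*δ) := fun h => hw (Set.Ioc_subset_Icc_self h)
    simp [hG, triFn_eq_zero this]
  have hG_int : MeasureTheory.Integrable G := hG_cont.integrable_of_hasCompactSupport hG_supp
  -- Fourier transform of G
  have hfourier : ∀ u : ℝ, FourierTransform.fourier G u = hfun (-(2*π)*u) := by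
    intro u
    rw [Real.fourier_real_eq_integral_exp_smul]
    have hs : ((c:ℂ) + I * ((-(2*π)*u : ℝ) : ℂ)) ≠ 0 := hsne _
    have key := tri_exp_integral δ hδ ((c:ℂ) + I * ((-(2*π)*u : ℝ) : ℂ)) hs
    rw [hhfun]
    simp only
    rw [← key]
    congr 1
    ext v
    rw [smul_eq_mul, hG]
    simp only
    rw [mul_left_comm, ← Complex.exp_add]
    congr 2
    push_cast
    ring
  -- continuity and integrability of hfun
  have h_cont : Continuous hfun := by
    apply Continuous.div
    · exact ((Complex.continuous_exp.comp (continuous_const.mul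
        (continuous_const.add (continuous_const.mul continuous_ofReal)))).sub continuous_const).pow 2
    · exact (continuous_const.add (continuous_const.mul continuous_ofReal)).pow 2
    · exact fun t => pow_ne_zero 2 (hsne t)
  have h_int : MeasureTheory.Integrable hfun := by
    set m : ℝ := min (c^2) 1 with hm
    have hm0 : 0 < m := lt_min (by positivity) one_pos
    set K : ℝ := (Real.exp (δ*c) + 1)^2 / m with hK
    apply MeasureTheory.Integrable.mono' ((integrable_inv_one_add_sq).const_mul K)
      h_cont.aestronglyMeasurable
    filter_upwards with t
    have hden : ‖((c:ℂ) + I * t)‖^2 = c^2 + t^2 := by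
      rw [Complex.sq_norm]
      simp [Complex.normSq_apply]
      ring
    have hnum : ‖Complex.exp ((δ:ℂ) * ((c:ℂ) + I * t)) - 1‖ ≤ Real.exp (δ*c) + 1 := by
      calc ‖Complex.exp ((δ:ℂ) * ((c:ℂ) + I * t)) - 1‖
          ≤ ‖Complex.exp ((δ:ℂ) * ((c:ℂ) + I * t))‖ + 1 := by
            simpa using norm_sub_le (Complex.exp ((δ:ℂ) * ((c:ℂ) + I * t))) 1
        _ = Real.exp (δ*c) + 1 := by rw [Complex.norm_exp]; simp
    have hfb : ‖hfun t‖ ≤ (Real.exp (δ*c) + 1)^2 / (c^2 + t^2) := by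
      rw [hhfun]
      simp only
      rw [norm_div, norm_pow, norm_pow, hden]
      gcongr
    have h2 : m * (1 + t^2) ≤ c^2 + t^2 := by
      have hm1 : m ≤ c^2 := min_le_left _ _
      have hm2 : m ≤ 1 := min_le_right _ _
      nlinarith
    calc ‖hfun t‖ ≤ (Real.exp (δ*c) + 1)^2 / (c^2 + t^2) := hfb
      _ ≤ (Real.exp (δ*c) + 1)^2 / (m * (1 + t^2)) := by
          gcongr
      _ = K * (1 + t^2)⁻¹ := by rw [hK]; field_simp
  have hF_int : MeasureTheory.Integrable (FourierTransform.fourier G) := by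
    rw [funext hfourier]
    exact h_int.comp_mul_left' (neg_ne_zero.mpr (by positivity))
  have hinv := hG_cont.fourierInv_fourier_eq hG_int hF_int
  -- rewrite integrand
  have hξc : (ξ : ℂ) ≠ 0 := Complex.ofReal_ne_zero.mpr hξ.ne'
  have step1 : (∫ t : ℝ, (ξ : ℂ) ^ ((c : ℂ) + I * t) *
          (Complex.exp ((δ : ℂ) * ((c : ℂ) + I * t)) - 1) ^ 2 / ((c : ℂ) + I * t) ^ 2)
      = ∫ t : ℝ, Complex.exp (((c:ℂ) + I * t) * (x:ℂ)) * hfun t := by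
    congr 1
    funext t
    rw [hhfun]
    simp only
    rw [mul_div_assoc]
    congr 1
    rw [Complex.cpow_def_of_ne_zero hξc, ← Complex.ofReal_log hξ.le, mul_comm]
  set f : ℝ → ℂ := fun t => Complex.exp (I * t * (x:ℂ)) * hfun t with hf
  have step2 : (∫ t : ℝ, Complex.exp (((c:ℂ) + I * t) * (x:ℂ)) * hfun t)
      = Complex.exp ((c:ℂ) * (x:ℂ)) * ∫ t : ℝ, f t := by
    rw [← MeasureTheory.integral_const_mul]
    congr 1
    funext t
    rw [hf]
    simp only
    rw [← mul_assoc, ← Complex.exp_add]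
    congr 2
    ring
  have step4 : (∫ u : ℝ, f (-(2*π)*u)) = G (-x) := by
    have hptw : ∀ u : ℝ, f (-(2*π)*u)
        = Complex.exp (((-2)*π*u*x : ℝ) * I) • FourierTransform.fourier G u := by
      intro u
      rw [smul_eq_mul, hfourier u, hf]
      simp only
      congr 1
      push_cast
      ring
    rw [funext hptw, ← Real.fourier_real_eq_integral_exp_smul]
    have := Real.fourierInv_eq_fourier_neg (FourierTransform.fourier G) (-x)
    rw [neg_neg] at this
    rw [← this, hinv]
  have step3 : (∫ t : ℝ, f t) = (2*π : ℝ) • G (-x) := by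
    have sub := MeasureTheory.Measure.integral_comp_mul_left f (-(2*π))
    rw [step4] at sub
    have habs : |(-(2*π))⁻¹| = (2*π)⁻¹ := by
      rw [abs_inv, abs_neg, abs_of_pos (by positivity)]
    rw [habs] at sub
    rw [sub, smul_smul]
    rw [mul_inv_cancel₀ (by positivity : (2*π : ℝ) ≠ 0), one_smul]
  have hval : (1 / (2 * (π:ℂ))) * ∫ t : ℝ,
        (ξ : ℂ) ^ ((c : ℂ) + I * t) *
          (Complex.exp ((δ : ℂ) * ((c : ℂ) + I * t)) - 1) ^ 2 / ((c : ℂ) + I * t) ^ 2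
      = (triFn δ (-x) : ℂ) := by
    rw [step1, step2, step3, Complex.real_smul, hG]
    simp only
    push_cast
    rw [← mul_assoc, ← mul_assoc]
    have hπc : ((π:ℂ)) ≠ 0 := Complex.ofReal_ne_zero.mpr hπ.ne'
    have : 1 / (2 * (π:ℂ)) * Complex.exp ((c:ℂ) * (x:ℂ)) * (2 * (π:ℂ))
        = Complex.exp ((c:ℂ) * (x:ℂ)) := by field_simp
    calc 1 / (2 * (π:ℂ)) * Complex.exp ((c:ℂ)*(x:ℂ)) * (2 * (π:ℂ))
          * ((triFn δ (-x) : ℂ) * Complex.exp ((c:ℂ) * (-(x:ℂ))))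
        = (triFn δ (-x) : ℂ) * (Complex.exp ((c:ℂ)*(x:ℂ)) * Complex.exp ((c:ℂ) * (-(x:ℂ))))
          * (1 / (2 * (π:ℂ)) * (2 * (π:ℂ))) := by ring
      _ = (triFn δ (-x) : ℂ) := by
          rw [← Complex.exp_add]
          have h0 : (c:ℂ)*(x:ℂ) + (c:ℂ) * (-(x:ℂ)) = 0 := by ring
          rw [h0, Complex.exp_zero]
          field_simp
  rw [hval]
  -- final case analysis
  by_cases hcase : Real.exp (-2 * δ) ≤ ξ ∧ ξ ≤ 1
  · rw [if_pos hcase]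
    norm_cast
    have hx1 : x ≤ 0 := Real.log_nonpos hξ.le hcase.2
    have hx2 : -2*δ ≤ x := by
      have := Real.log_le_log (Real.exp_pos _) hcase.1
      rwa [Real.log_exp] at this
    have e1 : Real.log (Real.exp (2*δ) * ξ) = 2*δ + x := by
      rw [Real.log_mul (Real.exp_ne_zero _) hξ.ne', Real.log_exp]
    have e2 : Real.log (1/ξ) = -x := by
      rw [one_div, Real.log_inv]
    rw [e1, e2]
    unfold triFn
    rw [max_eq_right, min_comm]
    · congr 1
      ring_nf
    · exact le_min (by linarith) (by linarith)
  · rw [if_neg hcase]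
    norm_cast
    rw [not_and_or, not_le, not_le] at hcase
    apply triFn_eq_zero
    simp only [Set.mem_Ioc, not_and_or, not_lt, not_le]
    rcases hcase with h | h
    · right
      have : x < -2*δ := by
        have := Real.log_lt_log hξ h
        rwa [Real.log_exp] at this
      linarith
    · left
      have : 0 < x := Real.log_pos h
      linarith
end

section
/- For real ξ > 0, δ > 0, and c > 1, the contour integral (1/2πi) ∫_{c-i∞}^{c+i∞} ξ^s ((e^{δ(s-1/2)} - e^{-δ(s-1/2)})/(s-1/2))² ds equals √ξ · (2δ - |log ξ|) if e^{-2δ} ≤ ξ ≤ e^{2δ}, and equals 0 otherwise. -/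
open Complex Real
open MeasureTheory FourierTransform



lemma sq_eq_aux (δ : ℝ) (z : ℂ) :
    ((Complex.exp ((δ:ℂ)*z) - Complex.exp (-((δ:ℂ)*z)))/z)^2
      = (Complex.exp (z*(2*δ)) + Complex.exp (-(z*(2*δ))) - 2)/z^2 := by
  rw [div_pow]
  congr 1
  have h1 : Complex.exp (z*(2*(δ:ℂ))) = Complex.exp ((δ:ℂ)*z) * Complex.exp ((δ:ℂ)*z) := by
    rw [← Complex.exp_add]; ring_nf
  have h2 : Complex.exp (-(z*(2*(δ:ℂ)))) = Complex.exp (-((δ:ℂ)*z)) * Complex.exp (-((δ:ℂ)*z)) := by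
    rw [← Complex.exp_add]; ring_nf
  have h3 : Complex.exp ((δ:ℂ)*z) * Complex.exp (-((δ:ℂ)*z)) = 1 := by
    rw [← Complex.exp_add]; simp
  push_cast at h1 h2 ⊢
  rw [h1, h2]
  linear_combination (-2 : ℂ) * h3

lemma tri_integral (δ : ℝ) (hδ : 0 < δ) (z : ℂ) (hz : z ≠ 0) :
    ∫ w in (-(2*δ))..(2*δ), ((max (2*δ - |w|) 0 : ℝ) : ℂ) * Complex.exp (z * w)
      = ((Complex.exp ((δ:ℂ)*z) - Complex.exp (-((δ:ℂ)*z)))/z)^2 := by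
  have hcont : Continuous fun w : ℝ => ((max (2*δ - |w|) 0 : ℝ) : ℂ) * Complex.exp (z * w) := by
    apply Continuous.mul
    · exact Complex.continuous_ofReal.comp ((continuous_const.sub _root_.continuous_abs).max continuous_const)
    · exact Complex.continuous_exp.comp (continuous_const.mul Complex.continuous_ofReal)
  have hsplit := intervalIntegral.integral_add_adjacent_intervals
    (μ := volume) (a := -(2*δ)) (b := 0) (c := 2*δ)
    (hcont.intervalIntegrable _ _) (hcont.intervalIntegrable _ _)
  -- right piece
  have hder : ∀ w : ℝ, HasDerivAt (fun w : ℝ => (w : ℂ)) 1 w := by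
    intro w
    exact Complex.ofRealCLM.hasDerivAt (x := w)
  have hright : ∫ w in (0:ℝ)..(2*δ), ((max (2*δ - |w|) 0 : ℝ) : ℂ) * Complex.exp (z * w)
      = Complex.exp (z*(2*δ))/z^2 - (2*δ/z + 1/z^2) := by
    have hcongr : Set.EqOn (fun w : ℝ => ((max (2*δ - |w|) 0 : ℝ) : ℂ) * Complex.exp (z * w))
        (fun w : ℝ => (2*(δ:ℂ) - w) * Complex.exp (z * w)) (Set.uIcc 0 (2*δ)) := by
      intro w hw
      rw [Set.uIcc_of_le (by linarith)] at hw
      have h1 : |w| = w := abs_of_nonneg hw.1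
      have h2 : (0:ℝ) ≤ 2*δ - w := by linarith [hw.2]
      simp only [h1, max_eq_left h2]
      push_cast
      ring
    rw [intervalIntegral.integral_congr hcongr]
    have key : ∀ w ∈ Set.uIcc (0:ℝ) (2*δ),
        HasDerivAt (fun w : ℝ => ((2*(δ:ℂ) - w)/z + 1/z^2) * Complex.exp (z*w))
          ((2*(δ:ℂ) - w) * Complex.exp (z * w)) w := by
      intro w _
      have h1 : HasDerivAt (fun w : ℝ => (2*(δ:ℂ) - (w:ℂ))) (-1) w := by
        exact (hder w).const_sub _
      have h2 : HasDerivAt (fun w : ℝ => (2*(δ:ℂ) - (w:ℂ))/z + 1/z^2) (-1/z) w :=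
        (h1.div_const z).add_const _
      have h3 : HasDerivAt (fun w : ℝ => Complex.exp (z*(w:ℂ))) (Complex.exp (z*w) * z) w := by
        simpa using ((hder w).const_mul z).cexp
      have := h2.mul h3
      refine this.congr_deriv ?_
      field_simp
      ring
    rw [intervalIntegral.integral_eq_sub_of_hasDerivAt key
      (((continuous_const.sub Complex.continuous_ofReal).mul
        (Complex.continuous_exp.comp (continuous_const.mul Complex.continuous_ofReal))).intervalIntegrable _ _)]
    push_cast
    field_simp
    simp only [sub_self, mul_zero, zero_mul, zero_add, one_mul, sub_zero, Complex.exp_zero, mul_one]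
    ring
  have hleft : ∫ w in (-(2*δ))..(0:ℝ), ((max (2*δ - |w|) 0 : ℝ) : ℂ) * Complex.exp (z * w)
      = (2*δ/z - 1/z^2) + Complex.exp (-(z*(2*δ)))/z^2 := by
    have hcongr : Set.EqOn (fun w : ℝ => ((max (2*δ - |w|) 0 : ℝ) : ℂ) * Complex.exp (z * w))
        (fun w : ℝ => (2*(δ:ℂ) + w) * Complex.exp (z * w)) (Set.uIcc (-(2*δ)) 0) := by
      intro w hw
      rw [Set.uIcc_of_le (by linarith)] at hw
      have h1 : |w| = -w := abs_of_nonpos hw.2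
      have h2 : (0:ℝ) ≤ 2*δ - -w := by linarith [hw.1]
      simp only [h1, max_eq_left h2]
      push_cast
      ring
    rw [intervalIntegral.integral_congr hcongr]
    have key : ∀ w ∈ Set.uIcc (-(2*δ)) (0:ℝ),
        HasDerivAt (fun w : ℝ => ((2*(δ:ℂ) + w)/z - 1/z^2) * Complex.exp (z*w))
          ((2*(δ:ℂ) + w) * Complex.exp (z * w)) w := by
      intro w _
      have h1 : HasDerivAt (fun w : ℝ => (2*(δ:ℂ) + (w:ℂ))) 1 w := by
        exact (hder w).const_add _
      have h2 : HasDerivAt (fun w : ℝ => (2*(δ:ℂ) + (w:ℂ))/z - 1/z^2) (1/z) w :=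
        (h1.div_const z).sub_const _
      have h3 : HasDerivAt (fun w : ℝ => Complex.exp (z*(w:ℂ))) (Complex.exp (z*w) * z) w := by
        simpa using ((hder w).const_mul z).cexp
      have := h2.mul h3
      refine this.congr_deriv ?_
      field_simp
      ring
    rw [intervalIntegral.integral_eq_sub_of_hasDerivAt key
      (((continuous_const.add Complex.continuous_ofReal).mul
        (Complex.continuous_exp.comp (continuous_const.mul Complex.continuous_ofReal))).intervalIntegrable _ _)]
    push_cast
    field_simp
    ring_nf
    simp only [Complex.exp_zero]
    ring
  rw [sq_eq_aux δ z, ← hsplit, hright, hleft]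
  rw [eq_div_iff (pow_ne_zero 2 hz)]
  ring_nf
  rw [← mul_pow, mul_inv_cancel₀ hz]
  ring



/-- For `ξ > 0`, `δ > 0`, `c > 1`, the vertical line integral
`(1/2πi) ∫_{c-i∞}^{c+i∞} ξ^s ((e^{δ(s-1/2)} - e^{-δ(s-1/2)})/(s-1/2))² ds` equals
`√ξ (2δ - |log ξ|)` if `e^{-2δ} ≤ ξ ≤ e^{2δ}`, and `0` otherwise. -/
theorem contour_integral_half_line (ξ δ c : ℝ) (hξ : 0 < ξ) (hδ : 0 < δ) (hc : 1 < c) :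
    (1 / (2 * π)) * ∫ t : ℝ,
        (ξ : ℂ) ^ ((c : ℂ) + I * t) *
          ((Complex.exp ((δ : ℂ) * (((c : ℂ) + I * t) - 1 / 2)) -
              Complex.exp (-((δ : ℂ) * (((c : ℂ) + I * t) - 1 / 2)))) /
            (((c : ℂ) + I * t) - 1 / 2)) ^ 2 =
      if Real.exp (-2 * δ) ≤ ξ ∧ ξ ≤ Real.exp (2 * δ) then
        ((Real.sqrt ξ * (2 * δ - |Real.log ξ|) : ℝ) : ℂ)
      else 0 := by
  set a : ℝ := c - 1/2 with ha_def
  clear_value a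
  have ha : (1:ℝ)/2 < a := by rw [ha_def]; linarith
  have ha0 : (0:ℝ) < a := by linarith
  set x : ℝ := Real.log ξ with hx_def
  clear_value x
  set h : ℝ → ℂ := fun w => ((max (2*δ - |w|) 0 : ℝ) : ℂ) * Complex.exp ((a:ℂ)*w) with hh_def
  set F : ℝ → ℂ := fun t =>
    ((Complex.exp ((δ:ℂ)*((a:ℂ)+I*t)) - Complex.exp (-((δ:ℂ)*((a:ℂ)+I*t))))/((a:ℂ)+I*t))^2
    with hF_def
  have hπ : (0:ℝ) < π := Real.pi_pos
  have hznz : ∀ t : ℝ, ((a:ℂ) + I*t) ≠ 0 := by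
    intro t heq
    have := congrArg Complex.re heq
    simp at this
    linarith
  have hcont_h : Continuous h := by
    apply Continuous.mul
    · exact Complex.continuous_ofReal.comp
        ((continuous_const.sub _root_.continuous_abs).max continuous_const)
    · exact Complex.continuous_exp.comp (continuous_const.mul Complex.continuous_ofReal)
  have hsupp : HasCompactSupport h := by
    apply HasCompactSupport.intro (isCompact_Icc (a := -(2*δ)) (b := 2*δ))
    intro w hw
    have : 2*δ < |w| := by
      rcases abs_cases w with ⟨h1, _⟩ | ⟨h1, _⟩ <;>
        simp only [Set.mem_Icc, not_and_or, not_le] at hw <;> rcases hw with hw | hw <;> linarith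
    simp only [hh_def]
    rw [max_eq_right (by linarith)]
    simp
  have hint_h : Integrable h := hcont_h.integrable_of_hasCompactSupport hsupp
  -- Fourier transform of h equals F
  have hF_eq : ∀ t : ℝ, 𝓕 h (-t/(2*π)) = F t := by
    intro t
    rw [Real.fourier_real_eq_integral_exp_smul]
    have step1 : ∀ v : ℝ, Complex.exp (↑(-2 * π * v * (-t/(2*π))) * I) • h v
        = ((max (2*δ - |v|) 0 : ℝ) : ℂ) * Complex.exp (((a:ℂ)+I*t) * v) := by
      intro v
      have harg : -2 * π * v * (-t/(2*π)) = v * t := by field_simp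
      rw [harg]
      simp only [hh_def, smul_eq_mul]
      rw [show ((a:ℂ)+I*t) * v = (a:ℂ)*v + (↑(v*t) * I) by push_cast; ring, Complex.exp_add]
      ring
    simp_rw [step1]
    have hzero : ∀ v : ℝ, v ∉ Set.Icc (-(2*δ)) (2*δ) →
        ((max (2*δ - |v|) 0 : ℝ) : ℂ) * Complex.exp (((a:ℂ)+I*t) * v) = 0 := by
      intro v hv
      have : 2*δ < |v| := by
        rcases abs_cases v with ⟨h1, _⟩ | ⟨h1, _⟩ <;>
          simp only [Set.mem_Icc, not_and_or, not_le] at hv <;> rcases hv with hv | hv <;> linarith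
      rw [max_eq_right (by linarith)]
      simp
    rw [← MeasureTheory.setIntegral_eq_integral_of_forall_compl_eq_zero hzero,
      MeasureTheory.integral_Icc_eq_integral_Ioc,
      ← intervalIntegral.integral_of_le (by linarith : -(2*δ) ≤ 2*δ)]
    rw [tri_integral δ hδ _ (hznz t)]
  -- continuity of F
  have hzc : Continuous fun t : ℝ => (a:ℂ) + I*t :=
    continuous_const.add (continuous_const.mul Complex.continuous_ofReal)
  have hF_cont : Continuous F := by
    apply Continuous.pow
    exact ((Complex.continuous_exp.comp (continuous_const.mul hzc)).sub
      (Complex.continuous_exp.comp ((continuous_const.mul hzc).neg))).div hzc hznz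
  -- integrability of F
  have hF_bound : ∀ t : ℝ, ‖F t‖ ≤ 16 * Real.exp (δ*a)^2 * (1+t^2)⁻¹ := by
    intro t
    set z : ℂ := (a:ℂ) + I*t with hz_def
    have hre : ((δ:ℂ)*z).re = δ*a := by
      simp [hz_def, Complex.mul_re]
    have hnum : ‖Complex.exp ((δ:ℂ)*z) - Complex.exp (-((δ:ℂ)*z))‖ ≤ 2 * Real.exp (δ*a) := by
      refine (norm_sub_le _ _).trans ?_
      rw [Complex.norm_exp, Complex.norm_exp]
      have h1 : (-((δ:ℂ)*z)).re = -(δ*a) := by rw [Complex.neg_re, hre]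
      rw [hre, h1]
      have : Real.exp (-(δ*a)) ≤ Real.exp (δ*a) := by
        apply Real.exp_le_exp.2
        nlinarith
      linarith
    have hden : ‖z‖^2 = a^2 + t^2 := by
      rw [Complex.sq_norm, Complex.normSq_apply]
      simp [hz_def]
      ring
    rw [hF_def]
    simp only
    rw [norm_pow, norm_div, div_pow, hden]
    have hd1 : (0:ℝ) < a^2 + t^2 := by positivity
    have hd2 : (0:ℝ) < 1 + t^2 := by positivity
    rw [← div_eq_mul_inv, div_le_div_iff₀ hd1 hd2]
    have hnn : (0:ℝ) ≤ ‖Complex.exp ((δ:ℂ)*z) - Complex.exp (-((δ:ℂ)*z))‖ := norm_nonneg _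
    have hsq : ‖Complex.exp ((δ:ℂ)*z) - Complex.exp (-((δ:ℂ)*z))‖^2 ≤ (2*Real.exp (δ*a))^2 :=
      pow_le_pow_left₀ hnn hnum 2
    have h4 : 1 + t^2 ≤ 4*(a^2+t^2) := by nlinarith
    have hE : (0:ℝ) < Real.exp (δ*a) := Real.exp_pos _
    nlinarith [mul_le_mul_of_nonneg_right hsq hd2.le,
      mul_le_mul_of_nonneg_left h4 (by positivity : (0:ℝ) ≤ 4*Real.exp (δ*a)^2)]
  have hF_int : Integrable F := by
    apply MeasureTheory.Integrable.mono
      ((integrable_inv_one_add_sq).const_mul (16 * Real.exp (δ*a)^2))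
      hF_cont.aestronglyMeasurable
    filter_upwards with t
    rw [Real.norm_eq_abs, _root_.abs_of_nonneg (by positivity)]
    exact hF_bound t
  -- integrability of 𝓕 h
  have hFh_eq : 𝓕 h = fun u => F (-(2*π) * u) := by
    funext u
    have h2 := hF_eq (-(2*π)*u)
    rw [show -(-(2*π)*u)/(2*π) = u by field_simp] at h2
    exact h2
  have hFh_int : Integrable (𝓕 h) := by
    rw [hFh_eq]
    exact (integrable_comp_mul_left_iff F (neg_ne_zero.2 (by positivity) : -(2*π) ≠ 0)).2 hF_int
  -- Fourier inversion
  have hinv : 𝓕⁻ (𝓕 h) = h := hcont_h.fourierInv_fourier_eq hint_h hFh_int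
  -- rewrite the integrand
  set Φ : ℝ → ℂ := fun u => Complex.exp (↑(-2*π*u*x) * I) • 𝓕 h u with hΦ_def
  have hint_eq : ∀ t : ℝ,
      (ξ : ℂ) ^ ((c : ℂ) + I * t) *
          ((Complex.exp ((δ : ℂ) * (((c : ℂ) + I * t) - 1 / 2)) -
              Complex.exp (-((δ : ℂ) * (((c : ℂ) + I * t) - 1 / 2)))) /
            (((c : ℂ) + I * t) - 1 / 2)) ^ 2
        = ((Real.exp (x*c) : ℝ) : ℂ) * Φ ((-(2*π))⁻¹ * t) := by
    intro t
    have hsub : ((c:ℂ) + I*t) - 1/2 = (a:ℂ) + I*t := by rw [ha_def]; push_cast; ring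
    rw [hsub]
    have hΦval : Φ ((-(2*π))⁻¹ * t) = Complex.exp (↑(t*x) * I) * F t := by
      rw [hΦ_def]
      simp only
      rw [show ((-(2*π))⁻¹ * t) = -t/(2*π) by field_simp]
      rw [hF_eq t, smul_eq_mul]
      congr 3
      field_simp
    rw [hΦval]
    have hcpow : (ξ : ℂ) ^ ((c : ℂ) + I * t)
        = ((Real.exp (x*c) : ℝ) : ℂ) * Complex.exp (↑(t*x) * I) := by
      rw [Complex.cpow_def_of_ne_zero (Complex.ofReal_ne_zero.2 hξ.ne')]
      rw [← Complex.ofReal_log hξ.le, ← hx_def]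
      rw [show (↑x : ℂ) * ((c:ℂ) + I*t) = ↑(x*c) + ↑(t*x) * I by push_cast; ring]
      rw [Complex.exp_add, Complex.ofReal_exp]
    rw [hcpow, hF_def]
    ring
  rw [MeasureTheory.integral_congr_ae (Filter.Eventually.of_forall hint_eq)]
  rw [MeasureTheory.integral_const_mul]
  rw [MeasureTheory.Measure.integral_comp_inv_mul_left Φ (-(2*π))]
  have hΦint : ∫ u, Φ u = 𝓕 (𝓕 h) x :=
    (Real.fourier_real_eq_integral_exp_smul (𝓕 h) x).symm
  have hFFh : 𝓕 (𝓕 h) x = h (-x) := by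
    have := Real.fourierInv_eq_fourier_neg (𝓕 h) (-x)
    rw [neg_neg] at this
    rw [← this, hinv]
  rw [hΦint, hFFh]
  have habs : |(-(2*π))| = 2*π := by rw [abs_neg, abs_of_pos (by positivity)]
  rw [habs]
  have hval : h (-x) = ((max (2*δ - |x|) 0 * Real.exp (a * (-x)) : ℝ) : ℂ) := by
    rw [hh_def]
    simp only [abs_neg]
    push_cast
    ring_nf
  rw [hval]
  rw [Complex.real_smul]
  have hsqrt : Real.exp (x*c) * (max (2*δ - |x|) 0 * Real.exp (a * (-x)))
      = Real.sqrt ξ * max (2*δ - |x|) 0 := by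
    rw [Real.sqrt_eq_rpow, Real.rpow_def_of_pos hξ, ← hx_def]
    rw [show x * (1/2) = x*c + a*(-x) by rw [ha_def]; ring, Real.exp_add]
    ring
  rw [show (1:ℂ)/(2*↑π) * (↑(Real.exp (x*c)) * (↑(2*π) * ↑(max (2*δ - |x|) 0 * Real.exp (a * (-x)))))
      = ((Real.exp (x*c) * (max (2*δ - |x|) 0 * Real.exp (a * (-x))) : ℝ) : ℂ) by
    push_cast
    have : (π:ℂ) ≠ 0 := Complex.ofReal_ne_zero.2 hπ.ne'
    field_simp]
  rw [hsqrt]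
  by_cases hif : Real.exp (-2 * δ) ≤ ξ ∧ ξ ≤ Real.exp (2 * δ)
  · rw [if_pos hif]
    have h1 : x ≤ 2*δ := by
      rw [hx_def]
      have := (Real.log_le_iff_le_exp hξ).2 hif.2
      linarith [this]
    have h2 : -(2*δ) ≤ x := by
      rw [hx_def]
      have := (Real.le_log_iff_exp_le hξ).2 hif.1
      linarith [this]
    have habs2 : |x| ≤ 2*δ := abs_le.2 ⟨h2, h1⟩
    rw [max_eq_left (by linarith)]
  · rw [if_neg hif]
    have : 2*δ < |x| := by
      rcases not_and_or.1 hif with hl | hr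
      · push_neg at hl
        have : x < -(2*δ) := by
          rw [hx_def]
          have := Real.log_lt_log hξ hl
          rw [Real.log_exp] at this
          linarith
        rw [abs_of_neg (by linarith)]
        linarith
      · push_neg at hr
        have : 2*δ < x := by
          rw [hx_def]
          have := Real.log_lt_log (Real.exp_pos _) hr
          rw [Real.log_exp] at this
          linarith
        rw [abs_of_pos (by linarith)]
        linarith
    rw [max_eq_right (by linarith)]
    simp
end

section
/- The Dickman function satisfies ρ(u) = u^{-u(1+o(1))} as u → ∞; in particular, for every ε > 0 there exists U such that for all u ≥ U, u^{-u(1+ε)} ≤ ρ(u) ≤ u^{-u(1-ε)}. -/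
set_option maxHeartbeats 1000000


open Real Set

/-- `ρ` is the Dickman function: continuous on `[0,∞)`, equal to `1` on `[0,1]`,
and satisfying `u ρ'(u) = -ρ(u-1)` for `u > 1`. -/
def IsDickman (ρ : ℝ → ℝ) : Prop :=
  ContinuousOn ρ (Set.Ici 0) ∧ (∀ u ∈ Set.Icc (0 : ℝ) 1, ρ u = 1) ∧
    ∀ u > (1 : ℝ), HasDerivAt ρ (-ρ (u - 1) / u) u

noncomputable def dickG (ρ : ℝ → ℝ) (x : ℝ) : ℝ := ∫ t in (0:ℝ)..x, ρ t

section Aux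

variable {ρ : ℝ → ℝ}

lemma dick_intgOn (hρ : IsDickman ρ) {a b : ℝ} (ha : 0 ≤ a) (hb : 0 ≤ b) :
    IntervalIntegrable ρ MeasureTheory.volume a b := by
  apply ContinuousOn.intervalIntegrable
  exact hρ.1.mono (by
    rcases le_total a b with h | h
    · rw [uIcc_of_le h]; exact fun x hx => le_trans ha hx.1
    · rw [uIcc_of_ge h]; exact fun x hx => le_trans hb hx.1)

lemma dickG_hasDeriv (hρ : IsDickman ρ) {x : ℝ} (hx : 0 < x) : HasDerivAt (dickG ρ) (ρ x) x := by
  have hca : ContinuousAt ρ x := hρ.1.continuousAt (Ici_mem_nhds hx)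
  exact intervalIntegral.integral_hasDerivAt_right (dick_intgOn hρ le_rfl hx.le)
    (ContinuousOn.stronglyMeasurableAtFilter isOpen_Ioi (hρ.1.mono Ioi_subset_Ici_self) x hx) hca

lemma dickG_cont (hρ : IsDickman ρ) {X : ℝ} (hX : 0 ≤ X) : ContinuousOn (dickG ρ) (Icc 0 X) := by
  have : MeasureTheory.IntegrableOn ρ (uIcc (0:ℝ) X) MeasureTheory.volume := by
    rw [uIcc_of_le hX]
    exact (hρ.1.mono (fun x hx => hx.1)).integrableOn_Icc
  have := intervalIntegral.continuousOn_primitive_interval (a := (0:ℝ)) (b := X) this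
  rwa [uIcc_of_le hX] at this

lemma dickG_split (hρ : IsDickman ρ) {u : ℝ} (hu : 1 ≤ u) :
    dickG ρ u - dickG ρ (u - 1) = ∫ t in (u-1)..u, ρ t := by
  have h1 : IntervalIntegrable ρ MeasureTheory.volume 0 (u-1) :=
    dick_intgOn hρ le_rfl (by linarith)
  have h2 : IntervalIntegrable ρ MeasureTheory.volume (u-1) u :=
    dick_intgOn hρ (by linarith) (by linarith)
  have := intervalIntegral.integral_add_adjacent_intervals h1 h2
  unfold dickG
  linarith [this]

lemma dickG_one (hρ : IsDickman ρ) : dickG ρ 1 = 1 := by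
  unfold dickG
  rw [intervalIntegral.integral_congr (g := fun _ => (1:ℝ))
    (fun t ht => hρ.2.1 t (by simpa [uIcc_of_le (zero_le_one)] using ht))]
  simp

/-- the key integral identity `u ρ(u) = ∫_{u-1}^u ρ`. -/
lemma dick_key (hρ : IsDickman ρ) {u : ℝ} (hu : 1 ≤ u) : u * ρ u = ∫ t in (u-1)..u, ρ t := by
  rw [← dickG_split hρ hu]
  have hρ1 : ρ 1 = 1 := hρ.2.1 1 ⟨zero_le_one, le_rfl⟩
  have hG0 : dickG ρ 0 = 0 := intervalIntegral.integral_same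
  rcases eq_or_lt_of_le hu with h | hu1
  · rw [← h]
    simp [hρ1, dickG_one hρ, hG0]
  set H : ℝ → ℝ := fun v => v * ρ v - (dickG ρ v - dickG ρ (v - 1)) with hH
  have hderH : ∀ x ∈ interior (Icc (1:ℝ) u), HasDerivAt H 0 x := by
    intro x hx
    rw [interior_Icc] at hx
    have hx1 : 1 < x := hx.1
    have hx0 : (0:ℝ) < x := by linarith
    have hd1 : HasDerivAt (fun v => v * ρ v) (1 * ρ x + x * (-ρ (x-1)/x)) x :=
      (hasDerivAt_id x).mul (hρ.2.2 x hx1)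
    have hd3 : HasDerivAt (fun v => dickG ρ (v-1)) (ρ (x-1) * 1) x := by
      have := (dickG_hasDeriv hρ (by linarith : (0:ℝ) < x - 1)).comp x ((hasDerivAt_id x).sub_const 1)
      exact this
    have hd := hd1.sub ((dickG_hasDeriv hρ hx0).sub hd3)
    have e : 1 * ρ x + x * (-ρ (x-1)/x) - (ρ x - ρ (x-1) * 1) = 0 := by
      rw [show x * (-ρ (x-1)/x) = -ρ (x-1) by field_simp]
      ring
    rw [e] at hd
    exact hd
  have hcontH : ContinuousOn H (Icc 1 u) := by
    have c1 : ContinuousOn (fun v => v * ρ v) (Icc 1 u) :=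
      continuousOn_id.mul (hρ.1.mono (fun x hx => le_trans zero_le_one hx.1))
    have c2 : ContinuousOn (dickG ρ) (Icc 1 u) :=
      (dickG_cont hρ (by linarith : (0:ℝ) ≤ u)).mono
        (fun x hx => ⟨le_trans zero_le_one hx.1, hx.2⟩)
    have c3 : ContinuousOn (fun v => dickG ρ (v-1)) (Icc 1 u) := by
      apply ContinuousOn.comp (dickG_cont hρ (by linarith : (0:ℝ) ≤ u - 1))
        ((continuous_id.sub continuous_const).continuousOn)
      intro x hx
      have h1 := hx.1
      have h2 := hx.2
      simp only [Pi.sub_apply, id_eq, mem_Icc]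
      constructor <;> linarith
    exact c1.sub (c2.sub c3)
  have hdiff : DifferentiableOn ℝ H (interior (Icc (1:ℝ) u)) :=
    fun x hx => (hderH x hx).differentiableAt.differentiableWithinAt
  have hmono := monotoneOn_of_deriv_nonneg (convex_Icc 1 u) hcontH hdiff
      (fun x hx => by rw [(hderH x hx).deriv])
  have hanti := antitoneOn_of_deriv_nonpos (convex_Icc 1 u) hcontH hdiff
      (fun x hx => by rw [(hderH x hx).deriv])
  have m1 : (1:ℝ) ∈ Icc (1:ℝ) u := ⟨le_rfl, hu⟩
  have m2 : u ∈ Icc (1:ℝ) u := ⟨hu, le_rfl⟩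
  have e1 : H 1 ≤ H u := hmono m1 m2 hu
  have e2 : H u ≤ H 1 := hanti m1 m2 hu
  have hH1 : H 1 = 0 := by simp [hH, hρ1, dickG_one hρ, hG0]
  have : H u = 0 := by linarith
  have := this
  simp only [hH] at this
  linarith

/-- positivity -/
lemma dick_pos (hρ : IsDickman ρ) {u : ℝ} (hu : 0 ≤ u) : 0 < ρ u := by
  by_contra hneg
  push_neg at hneg
  have hu1 : 1 ≤ u := by
    by_contra h
    push_neg at h
    rw [hρ.2.1 u ⟨hu, h.le⟩] at hneg
    linarith
  set S : Set ℝ := Ici 1 ∩ ρ ⁻¹' (Iic 0) with hS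
  have hne : S.Nonempty := ⟨u, hu1, hneg⟩
  have hbdd : BddBelow S := ⟨1, fun v hv => hv.1⟩
  have hclosed : IsClosed S :=
    ContinuousOn.preimage_isClosed_of_isClosed
      (hρ.1.mono (Ici_subset_Ici.2 zero_le_one)) isClosed_Ici isClosed_Iic
  set u0 : ℝ := sInf S with hu0def
  have hu0 : u0 ∈ S := hclosed.csInf_mem hne hbdd
  have hu01 : 1 ≤ u0 := hu0.1
  have hposlt : ∀ t, 0 ≤ t → t < u0 → 0 < ρ t := by
    intro t ht htu
    rcases le_or_gt t 1 with h1 | h1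
    · rw [hρ.2.1 t ⟨ht, h1⟩]; norm_num
    · by_contra hc
      push_neg at hc
      exact absurd (csInf_le hbdd ⟨h1.le, hc⟩) (not_le.2 htu)
  have hint : IntervalIntegrable ρ MeasureTheory.volume (u0-1) u0 :=
    dick_intgOn hρ (by linarith) (by linarith)
  have ipos : 0 < ∫ t in (u0-1)..u0, ρ t := by
    apply intervalIntegral.intervalIntegral_pos_of_pos_on hint _ (by linarith)
    intro x hx
    exact hposlt x (by linarith [hx.1]) hx.2
  rw [← dick_key hρ hu01] at ipos
  have h2 : ρ u0 ≤ 0 := hu0.2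
  nlinarith [mul_nonneg (le_trans zero_le_one hu01) (neg_nonneg.2 h2)]

lemma dick_anti (hρ : IsDickman ρ) : AntitoneOn ρ (Ici 0) := by
  have h1 : AntitoneOn ρ (Ici 1) := by
    apply antitoneOn_of_deriv_nonpos (convex_Ici 1)
      (hρ.1.mono (Ici_subset_Ici.2 zero_le_one))
    · intro x hx
      rw [interior_Ici] at hx
      exact (hρ.2.2 x hx).differentiableAt.differentiableWithinAt
    · intro x hx
      rw [interior_Ici] at hx
      rw [(hρ.2.2 x hx).deriv]
      have hp := dick_pos hρ (u := x - 1) (by simp at hx; linarith)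
      simp only [mem_Ioi] at hx
      apply div_nonpos_of_nonpos_of_nonneg (by linarith) (by linarith)
  intro a ha b hb hab
  simp only [mem_Ici] at ha hb
  rcases le_total b 1 with hb1 | hb1
  · rw [hρ.2.1 a ⟨ha, le_trans hab hb1⟩, hρ.2.1 b ⟨hb, hb1⟩]
  · rcases le_total a 1 with ha1 | ha1
    · rw [hρ.2.1 a ⟨ha, ha1⟩]
      calc ρ b ≤ ρ 1 := h1 (mem_Ici.2 le_rfl) (mem_Ici.2 hb1) hb1
      _ = 1 := hρ.2.1 1 ⟨zero_le_one, le_rfl⟩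
    · exact h1 (mem_Ici.2 ha1) (mem_Ici.2 hb1) hab

lemma dick_le_one (hρ : IsDickman ρ) {u : ℝ} (hu : 0 ≤ u) : ρ u ≤ 1 := by
  have h0 : ρ 0 = 1 := hρ.2.1 0 (by constructor <;> norm_num)
  calc ρ u ≤ ρ 0 := dick_anti hρ (le_refl (0:ℝ)) hu hu
  _ = 1 := h0

/-- upper step: `ρ(u) ≤ ρ(u-1)/u` for `u ≥ 1`. -/
lemma dick_step_up (hρ : IsDickman ρ) {u : ℝ} (hu : 1 ≤ u) : u * ρ u ≤ ρ (u - 1) := by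
  rw [dick_key hρ hu]
  have h2 : IntervalIntegrable ρ MeasureTheory.volume (u-1) u :=
    dick_intgOn hρ (by linarith) (by linarith)
  calc (∫ t in (u-1)..u, ρ t) ≤ ∫ _t in (u-1)..u, ρ (u-1) := by
        apply intervalIntegral.integral_mono_on (by linarith) h2
          intervalIntegrable_const
        intro x hx
        exact dick_anti hρ (by simp; linarith [hx.1]) (by simp; linarith [hx.1]) hx.1
  _ = ρ (u - 1) := by simp

/-- lower step: `u ρ(u) ≥ h ρ(u-1+h)` for `u ≥ 1`, `0 < h < 1`. -/
lemma dick_step_down (hρ : IsDickman ρ) {u h : ℝ} (hu : 1 ≤ u) (h0 : 0 < h) (h1 : h < 1) :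
    h * ρ (u - 1 + h) ≤ u * ρ u := by
  rw [dick_key hρ hu]
  have hint1 : IntervalIntegrable ρ MeasureTheory.volume (u-1) (u-1+h) :=
    dick_intgOn hρ (by linarith) (by linarith)
  have hint2 : IntervalIntegrable ρ MeasureTheory.volume (u-1+h) u :=
    dick_intgOn hρ (by linarith) (by linarith)
  have e1 : (∫ t in (u-1)..(u-1+h), ρ t) + (∫ t in (u-1+h)..u, ρ t) = ∫ t in (u-1)..u, ρ t :=
    intervalIntegral.integral_add_adjacent_intervals hint1 hint2
  have e2 : h * ρ (u - 1 + h) ≤ ∫ t in (u-1)..(u-1+h), ρ t := by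
    have : (∫ _t in (u-1)..(u-1+h), ρ (u-1+h)) ≤ ∫ t in (u-1)..(u-1+h), ρ t := by
      apply intervalIntegral.integral_mono_on (by linarith) intervalIntegrable_const hint1
      intro x hx
      exact dick_anti hρ (by simp; linarith [hx.1]) (by simp; linarith) hx.2
    simpa using this
  have e3 : 0 ≤ ∫ t in (u-1+h)..u, ρ t := by
    apply intervalIntegral.integral_nonneg (by linarith)
    intro x hx
    exact (dick_pos hρ (by linarith [hx.1])).le
  linarith

lemma dick_upper_fact (hρ : IsDickman ρ) :
    ∀ n : ℕ, ∀ u : ℝ, (n:ℝ) ≤ u → ρ u ≤ 1 / (Nat.factorial n : ℝ) := by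
  intro n
  induction n with
  | zero =>
    intro u hu
    simpa using dick_le_one hρ (by simpa using hu)
  | succ n ih =>
    intro u hu
    have hn : (n:ℝ) + 1 ≤ u := by push_cast at hu; linarith
    have hn0 : (0:ℝ) ≤ n := Nat.cast_nonneg n
    have hu1 : 1 ≤ u := by linarith
    have hu0 : (0:ℝ) < u := by linarith
    have hstep := dick_step_up hρ hu1
    have hih := ih (u-1) (by linarith)
    have hfp : (0:ℝ) < (Nat.factorial n : ℝ) := by
      exact_mod_cast n.factorial_pos
    have hρpos : 0 < ρ u := dick_pos hρ (by linarith)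
    have key : u * ρ u * (Nat.factorial n : ℝ) ≤ 1 := by
      have := mul_le_mul_of_nonneg_right (le_trans hstep hih) hfp.le
      rwa [one_div, inv_mul_cancel₀ (ne_of_gt hfp)] at this
    rw [Nat.factorial_succ]
    push_cast
    rw [le_div_iff₀ (by positivity)]
    nlinarith [key, mul_le_mul_of_nonneg_right hn (mul_pos hρpos hfp).le]

lemma dick_lower_pow (hρ : IsDickman ρ) {h : ℝ} (h0 : 0 < h) (h1 : h < 1) :
    ∀ n : ℕ, ∀ u : ℝ, 0 ≤ u → u ≤ 1 + n * (1 - h) →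
      h ^ n ≤ (max u 1) ^ n * ρ u := by
  intro n
  induction n with
  | zero =>
    intro u h0u h1u
    simp only [Nat.cast_zero, zero_mul, add_zero] at h1u
    simp [hρ.2.1 u ⟨h0u, h1u⟩]
  | succ n ih =>
    intro u h0u h1u
    have hM1 : (1:ℝ) ≤ max u 1 := le_max_right _ _
    rcases le_or_gt u (1 + n * (1 - h)) with hle | hgt
    · have hia := ih u h0u hle
      have hnn : 0 ≤ (max u 1)^n * ρ u :=
        mul_nonneg (pow_nonneg (by linarith) n) (dick_pos hρ h0u).le
      rw [pow_succ, pow_succ]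
      calc h ^ n * h ≤ ((max u 1)^n * ρ u) * max u 1 :=
            mul_le_mul hia (le_trans h1.le hM1) h0.le hnn
        _ = (max u 1)^n * max u 1 * ρ u := by ring
    · have hu1 : 1 ≤ u := by
        have : (0:ℝ) ≤ (n:ℝ) * (1 - h) :=
          mul_nonneg (Nat.cast_nonneg n) (by linarith)
        linarith
      have hu0 : (0:ℝ) < u := by linarith
      have hstep := dick_step_down hρ hu1 h0 h1
      have hcast : ((n+1:ℕ):ℝ) = (n:ℝ) + 1 := by push_cast; ring
      have hu' : u - 1 + h ≤ 1 + n * (1 - h) := by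
        rw [hcast] at h1u; linarith
      have h0u' : 0 ≤ u - 1 + h := by linarith
      have ihu := ih (u-1+h) h0u' hu'
      have hmax' : max (u-1+h) 1 ≤ u := max_le (by linarith) hu1
      have m1 : (0:ℝ) ≤ max (u-1+h) 1 := by
        have := le_max_right (u-1+h) (1:ℝ); linarith
      have key2 : (max (u-1+h) 1)^n * (h * ρ (u-1+h)) ≤ u^n * (u * ρ u) :=
        mul_le_mul (pow_le_pow_left₀ m1 hmax' n) hstep
          (mul_nonneg h0.le (dick_pos hρ h0u').le)
          (pow_nonneg hu0.le n)
      rw [max_eq_left hu1, pow_succ, pow_succ]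
      calc h ^ n * h ≤ ((max (u-1+h) 1)^n * ρ (u-1+h)) * h :=
            mul_le_mul_of_nonneg_right ihu h0.le
        _ = (max (u-1+h) 1)^n * (h * ρ (u-1+h)) := by ring
        _ ≤ u^n * (u * ρ u) := key2
        _ = u^n * u * ρ u := by ring

end Aux

lemma dick_fact_lower : ∀ n : ℕ, (n:ℝ)^n ≤ (Nat.factorial n : ℝ) * Real.exp 1 ^ n := by
  intro n
  induction n with
  | zero => simp
  | succ n ih =>
    rcases Nat.eq_zero_or_pos n with rfl | hn0
    · norm_num [Nat.factorial]
    have hn : (0:ℝ) < n := by exact_mod_cast hn0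
    have e1 : (n:ℝ) + 1 ≤ n * Real.exp (1/(n:ℝ)) := by
      have hh := Real.add_one_le_exp (1/(n:ℝ))
      have h2 := mul_le_mul_of_nonneg_left hh hn.le
      have h3 : (n:ℝ) * (1/(n:ℝ) + 1) = (n:ℝ) + 1 := by field_simp; ring
      linarith
    have e2 : ((n:ℝ)+1)^n ≤ ((n:ℝ) * Real.exp (1/(n:ℝ)))^n :=
      pow_le_pow_left₀ (by positivity) e1 n
    have e3 : ((n:ℝ) * Real.exp (1/(n:ℝ)))^n = (n:ℝ)^n * Real.exp 1 := by
      rw [mul_pow, ← Real.exp_nat_mul]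
      congr 2
      field_simp
    have hfp : (0:ℝ) ≤ (Nat.factorial n : ℝ) := by positivity
    calc ((n+1:ℕ):ℝ)^(n+1) = ((n:ℝ)+1) * ((n:ℝ)+1)^n := by push_cast; ring
      _ ≤ ((n:ℝ)+1) * ((n:ℝ)^n * Real.exp 1) := by
          apply mul_le_mul_of_nonneg_left (le_trans e2 (le_of_eq e3)) (by positivity)
      _ ≤ ((n:ℝ)+1) * (((Nat.factorial n : ℝ) * Real.exp 1 ^ n) * Real.exp 1) := by
          apply mul_le_mul_of_nonneg_left
            (mul_le_mul_of_nonneg_right ih (Real.exp_pos 1).le) (by positivity)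
      _ = ((Nat.factorial (n+1) : ℝ)) * Real.exp 1 ^ (n+1) := by
          rw [Nat.factorial_succ]; push_cast; ring

/-- The Dickman function satisfies `ρ(u) = u^{-u(1+o(1))}`: for every `ε > 0` there is `U`
such that `u^{-u(1+ε)} ≤ ρ(u) ≤ u^{-u(1-ε)}` for all `u ≥ U`. -/
theorem dickman_asymptotic (ρ : ℝ → ℝ) (hρ : IsDickman ρ) :
    ∀ ε > (0 : ℝ), ∃ U : ℝ, ∀ u ≥ U,
      u ^ (-(u * (1 + ε))) ≤ ρ u ∧ ρ u ≤ u ^ (-(u * (1 - ε))) := by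
  intro ε hε
  set h : ℝ := ε / (2 + ε) with hdef
  have h0 : 0 < h := div_pos hε (by linarith)
  have h1 : h < 1 := by rw [hdef, div_lt_one (by linarith)]; linarith
  set L : ℝ := -Real.log h with hLdef
  have hLpos : 0 < L := by
    rw [hLdef, neg_pos]
    exact Real.log_neg h0 h1
  refine ⟨max 3 (max (Real.exp ((2+ε)*L/ε)) (Real.exp (3/ε))), ?_⟩
  intro u hu
  have hu3 : (3:ℝ) ≤ u := le_trans (le_max_left _ _) hu
  have hu0 : (0:ℝ) < u := by linarith
  have hu1 : (1:ℝ) ≤ u := by linarith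
  set l : ℝ := Real.log u with hldef
  have hl2 : Real.exp ((2+ε)*L/ε) ≤ u :=
    le_trans (le_trans (le_max_left _ _) (le_max_right _ _)) hu
  have hl3 : Real.exp (3/ε) ≤ u :=
    le_trans (le_trans (le_max_right _ _) (le_max_right _ _)) hu
  have hlogA : (2+ε)*L/ε ≤ l := (Real.le_log_iff_exp_le hu0).2 hl2
  have hlogB : 3/ε ≤ l := (Real.le_log_iff_exp_le hu0).2 hl3
  have hl1 : 1 ≤ l := by
    have he : Real.exp 1 ≤ u := by
      have := Real.exp_one_lt_d9
      linarith
    exact (Real.le_log_iff_exp_le hu0).2 he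
  have hlle : l ≤ u - 1 := Real.log_le_sub_one_of_pos hu0
  constructor
  · -- lower bound
    set n : ℕ := ⌈(u-1)/(1-h)⌉₊ with hndef
    have h1h : (0:ℝ) < 1 - h := by linarith
    have hx0 : (0:ℝ) ≤ (u-1)/(1-h) := div_nonneg (by linarith) h1h.le
    have hcond : u ≤ 1 + (n:ℝ) * (1-h) := by
      have h5 := Nat.le_ceil ((u-1)/(1-h))
      have h6 := (div_le_iff₀ h1h).1 h5
      linarith
    have hceil : (n:ℝ) < (u-1)/(1-h) + 1 := Nat.ceil_lt_add_one hx0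
    have h1h' : 1 - h = 2/(2+ε) := by
      rw [hdef]
      field_simp
      ring
    have hdiv : (u-1)/(1-h) = (u-1) * ((2+ε)/2) := by
      rw [h1h', div_div_eq_mul_div]
      ring
    have hn2 : (n:ℝ) ≤ u * (1+ε/2) := by nlinarith [hceil, hdiv, hε]
    have hl4 := dick_lower_pow hρ h0 h1 n u (by linarith) hcond
    rw [max_eq_left hu1] at hl4
    have hpr : (h/u)^n ≤ ρ u := by
      rw [div_pow, div_le_iff₀ (pow_pos hu0 n)]
      nlinarith [hl4]
    refine le_trans ?_ hpr
    rw [Real.rpow_def_of_pos hu0]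
    have hq : (0:ℝ) < h/u := by positivity
    rw [← Real.exp_log (pow_pos hq n), Real.log_pow, Real.log_div (ne_of_gt h0) (ne_of_gt hu0)]
    apply Real.exp_le_exp.2
    have hLl : Real.log h = -L := by rw [hLdef]; ring
    rw [hLl, ← hldef]
    have key : (1+ε/2) * L ≤ (ε/2) * l := by
      have h2 : (ε/2) * ((2+ε)*L/ε) ≤ (ε/2) * l :=
        mul_le_mul_of_nonneg_left hlogA (by positivity)
      have h3 : (ε/2) * ((2+ε)*L/ε) = (1+ε/2)*L := by field_simp
      linarith
    have hstep1 : (n:ℝ) * (l + L) ≤ u*(1+ε/2) * (l + L) :=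
      mul_le_mul_of_nonneg_right hn2 (by linarith)
    nlinarith [mul_le_mul_of_nonneg_left key hu0.le, hstep1]
  · -- upper bound
    set n : ℕ := ⌊u⌋₊ with hndef
    have hnle : (n:ℝ) ≤ u := Nat.floor_le hu0.le
    have hnge : u - 1 ≤ (n:ℝ) := by linarith [Nat.lt_floor_add_one u]
    have hn2 : (2:ℝ) ≤ (n:ℝ) := by linarith
    have hup := dick_upper_fact hρ n u hnle
    have hnpos : (0:ℝ) < (n:ℝ) := by linarith
    have hfl := dick_fact_lower n
    have hexpn : Real.exp ((n:ℝ) * Real.log n) = (n:ℝ)^n := by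
      rw [Real.exp_nat_mul, Real.exp_log hnpos]
    have hexpn2 : Real.exp ((n:ℝ)) = Real.exp 1 ^ n := by
      rw [← Real.exp_nat_mul, mul_one]
    have hfact : Real.exp ((n:ℝ) * Real.log n - n) ≤ (Nat.factorial n : ℝ) := by
      rw [Real.exp_sub, hexpn, hexpn2, div_le_iff₀ (by positivity)]
      exact hfl
    have hlogn1 : Real.log (u-1) ≤ Real.log n := Real.log_le_log (by linarith) hnge
    have hmono : (u-1) * Real.log (u-1) ≤ (n:ℝ) * Real.log n :=
      mul_le_mul hnge hlogn1 (Real.log_nonneg (by linarith)) hnpos.le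
    have hln1 : l - 1 ≤ Real.log (u-1) := by
      have hq : (0:ℝ) < u/(u-1) := by
        apply div_pos hu0
        linarith
      have hh : Real.log (u/(u-1)) ≤ u/(u-1) - 1 := Real.log_le_sub_one_of_pos hq
      have hd : Real.log (u/(u-1)) = l - Real.log (u-1) := by
        rw [Real.log_div (ne_of_gt hu0) (ne_of_gt (by linarith : (0:ℝ) < u - 1))]
      have h7 : u/(u-1) ≤ 2 := by
        rw [div_le_iff₀ (by linarith : (0:ℝ) < u - 1)]
        linarith
      linarith
    have h9 : 3*u ≤ ε*(u*l) := by
      have h2 := mul_le_mul_of_nonneg_left hlogB (mul_nonneg hε.le hu0.le)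
      have h3 : (ε*u) * (3/ε) = 3*u := by field_simp
      nlinarith [h2, h3]
    have hexpineq : u*(1-ε)*l ≤ (n:ℝ)*Real.log n - n := by
      have hm2 := mul_le_mul_of_nonneg_left hln1 (by linarith : (0:ℝ) ≤ u - 1)
      nlinarith [hmono, hm2, hnle, h9, hlle, hl1]
    have hfp : (0:ℝ) < (Nat.factorial n : ℝ) := by exact_mod_cast n.factorial_pos
    have hexp2 : Real.exp (u*(1-ε)*l) ≤ (Nat.factorial n : ℝ) :=
      le_trans (Real.exp_le_exp.2 hexpineq) hfact
    rw [Real.rpow_def_of_pos hu0, ← hldef]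
    refine le_trans hup ?_
    calc (1:ℝ)/(Nat.factorial n : ℝ) ≤ 1 / Real.exp (u*(1-ε)*l) :=
          one_div_le_one_div_of_le (Real.exp_pos _) hexp2
      _ = Real.exp (l * -(u*(1-ε))) := by
          rw [one_div, ← Real.exp_neg]
          congr 1
          ring
end
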